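/- Let y₁, y₂ > 0 be real numbers with y₁² + y₂² < 1. If there exists a complex number t with E(t) = 0 and D(t) = 0 (viewing E and D as polynomials with real coefficients evaluated over ℂ), then 27·y₁⁴·y₂⁴ − 18·y₁²·y₂² + 4·y₁² + 4·y₂² = 1. -/

import Mathlib

/-- The polynomial `E(t)` evaluated over ℂ. -/
def EFunC (y₁ y₂ : ℝ) (t : ℂ) : ℂ :=
  (y₁ : ℂ)^2 * (t^2 + 4*t + 1)^3 + (y₂ : ℂ)^2 * (t^2 - 2*t - 2)^3
    + 2*t^6 + 6*t^5 - 15*t^4 - 40*t^3 - 15*t^2 + 6*t + 2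

/-- The polynomial `D(t)` evaluated over ℂ. -/
def DFunC (y₁ y₂ : ℝ) (t : ℂ) : ℂ :=
  (y₁ : ℂ)^2 * (1 - t^2) * (t^2 + 4*t + 1)^2
    + (y₂ : ℂ)^2 * (2*t + t^2) * (t^2 - 2*t - 2)^2
    + 6*t^5 + 15*t^4 - 15*t^2 - 6*t

/-!
Write `a = y₁²`, `b = y₂²`, `p = t² + 4t + 1`, `q = t² − 2t − 2`, `r = t² + t + 1`. Since `E` and `D`
are linear in `(a, b)`, Cramer's rule eliminates them: the determinant of the system is
`2 p² q² r²`, and after cancelling a common factor a common root `t` with `r(t) ≠ 0` forces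
`a p² = t(4 + 6t − t³)` and `b q² = 1 + 4t − 4t³ − t⁴`. This is a rational parametrization of the
curve `27a²b² − 18ab + 4a + 4b = 1` (and `p, q` cannot vanish there). If instead `r(t) = 0`, then
`E(t) = 27(a + b − 1)`, which puts `(y₁, y₂)` on the unit circle.
-/

namespace Whittaker

variable {K : Type*}

section CommRing

variable [CommRing K] (a b t : K)

def E : K :=
  a * (t^2 + 4*t + 1)^3 + b * (t^2 - 2*t - 2)^3
    + 2*t^6 + 6*t^5 - 15*t^4 - 40*t^3 - 15*t^2 + 6*t + 2

def D : K :=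
  a * (1 - t^2) * (t^2 + 4*t + 1)^2 + b * (2*t + t^2) * (t^2 - 2*t - 2)^2
    + 6*t^5 + 15*t^4 - 15*t^2 - 6*t

def caustic : K :=
  27 * a^2 * b^2 - 18 * a * b + 4 * a + 4 * b - 1

theorem cramer_fst :
    (t^2 + 2*t) * E a b t - (t^2 - 2*t - 2) * D a b t
      = 2 * (t^2 + t + 1)^2 * (a * (t^2 + 4*t + 1)^2 - t * (4 + 6*t - t^3)) := by
  unfold E D; ring

theorem cramer_snd :
    (t^2 + 4*t + 1) * D a b t - (1 - t^2) * E a b t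
      = 2 * (t^2 + t + 1)^2 * (b * (t^2 - 2*t - 2)^2 - (1 + 4*t - 4*t^3 - t^4)) := by
  unfold E D; ring

def causticHom (u v X Y : K) : K :=
  27 * u^2 * v^2 - 18 * u * v * (X * Y) + 4 * u * X * Y^2 + 4 * v * X^2 * Y - (X * Y)^2

theorem caustic_mul_sq (X Y : K) :
    caustic a b * (X * Y)^2 = causticHom (a * X) (b * Y) X Y := by
  unfold caustic causticHom; ring

theorem causticHom_param :
    causticHom (t * (4 + 6*t - t^3)) (1 + 4*t - 4*t^3 - t^4)
      ((t^2 + 4*t + 1)^2) ((t^2 - 2*t - 2)^2) = 0 := by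
  unfold causticHom; ring

variable {a b t}

-- Modulo `t² + t + 1` one has `t² + 4t + 1 ≡ 3t`, `t² − 2t − 2 ≡ 3t²` and `t³ ≡ 1`.
theorem E_eq_of_sq_add_add_one_eq_zero (hr : t^2 + t + 1 = 0) :
    E a b t = 27 * (a + b - 1) := by
  unfold E
  linear_combination (a * (-26 + 38*t + 39*t^2 + 11*t^3 + t^4)
    + b * (-35 + 11*t + 12*t^2 - 7*t^3 + t^4) + (29 - 23*t - 21*t^2 + 4*t^3 + 2*t^4)) * hr

end CommRing

section Field

variable [Field K] [CharZero K] {a b t : K}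

theorem param_of_E_eq_zero_of_D_eq_zero (hE : E a b t = 0) (hD : D a b t = 0)
    (hr : t^2 + t + 1 ≠ 0) :
    a * (t^2 + 4*t + 1)^2 = t * (4 + 6*t - t^3) ∧
      b * (t^2 - 2*t - 2)^2 = 1 + 4*t - 4*t^3 - t^4 := by
  have hr2 : 2 * (t^2 + t + 1)^2 ≠ 0 := mul_ne_zero two_ne_zero (pow_ne_zero 2 hr)
  obtain ⟨ha, hb⟩ :
      2 * (t^2 + t + 1)^2 * (a * (t^2 + 4*t + 1)^2 - t * (4 + 6*t - t^3)) = 0 ∧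
      2 * (t^2 + t + 1)^2 * (b * (t^2 - 2*t - 2)^2 - (1 + 4*t - 4*t^3 - t^4)) = 0 :=
    ⟨by rw [← cramer_fst, hE, hD]; ring, by rw [← cramer_snd, hE, hD]; ring⟩
  exact ⟨sub_eq_zero.mp ((mul_eq_zero.mp ha).resolve_left hr2),
    sub_eq_zero.mp ((mul_eq_zero.mp hb).resolve_left hr2)⟩

theorem add_eq_one_or_caustic_eq_zero (hE : E a b t = 0) (hD : D a b t = 0) :
    a + b = 1 ∨ caustic a b = 0 := by
  by_cases hr : t^2 + t + 1 = 0
  · have h : (27 : K) * (a + b - 1) = 0 := (E_eq_of_sq_add_add_one_eq_zero hr).symm.trans hE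
    exact .inl (sub_eq_zero.mp ((mul_eq_zero.mp h).resolve_left (by norm_num)))
  obtain ⟨ha, hb⟩ := param_of_E_eq_zero_of_D_eq_zero hE hD hr
  -- The numerators reduce to `9(4t + 1)` modulo `p` and to `-9(4t + 3)` modulo `q`.
  have hp : t^2 + 4*t + 1 ≠ 0 := by
    intro hp
    have h : 9 * (4*t + 1) = 0 := by
      linear_combination -ha + (a * (t^2 + 4*t + 1) + t^2 - 4*t + 9) * hp
    have : (9 : K) = 0 := by linear_combination 144 * hp - (4*t + 15) * h
    norm_num at this
  have hq : t^2 - 2*t - 2 ≠ 0 := by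
    intro hq
    have h : 9 * (4*t + 3) = 0 := by
      linear_combination hb - (b * (t^2 - 2*t - 2) + t^2 + 6*t + 14) * hq
    have : (9 : K) = 0 := by linear_combination 144 * hq - (4*t - 11) * h
    norm_num at this
  have h := caustic_mul_sq a b ((t^2 + 4*t + 1)^2) ((t^2 - 2*t - 2)^2)
  rw [ha, hb, causticHom_param] at h
  exact .inr ((mul_eq_zero.mp h).resolve_right
    (pow_ne_zero 2 (mul_ne_zero (pow_ne_zero 2 hp) (pow_ne_zero 2 hq))))

end Field

end Whittaker

theorem stmt_11_general (y₁ y₂ : ℝ)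
    (h : y₁^2 + y₂^2 < 1)
    (hroot : ∃ t : ℂ, EFunC y₁ y₂ t = 0 ∧ DFunC y₁ y₂ t = 0) :
    27 * y₁^4 * y₂^4 - 18 * y₁^2 * y₂^2 + 4 * y₁^2 + 4 * y₂^2 = 1 := by
  obtain ⟨t, hE, hD⟩ := hroot
  rcases Whittaker.add_eq_one_or_caustic_eq_zero (a := (y₁ : ℂ)^2) (b := (y₂ : ℂ)^2) hE hD
    with hab | hc
  · exact absurd (by exact_mod_cast hab) h.ne
  · unfold Whittaker.caustic at hc
    exact_mod_cast (by linear_combination hc : 27 * (y₁ : ℂ)^4 * (y₂ : ℂ)^4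
      - 18 * (y₁ : ℂ)^2 * (y₂ : ℂ)^2 + 4 * (y₁ : ℂ)^2 + 4 * (y₂ : ℂ)^2 = 1)

/-- if `y₁² + y₂² < 1` and `E` and `D` have a common complex zero,
then `(y₁,y₂)` lies on the caustic curve `27y₁⁴y₂⁴ − 18y₁²y₂² + 4y₁² + 4y₂² = 1`. -/
theorem stmt_11 (y₁ y₂ : ℝ) (hy₁ : 0 < y₁) (hy₂ : 0 < y₂)
    (h : y₁^2 + y₂^2 < 1)
    (hroot : ∃ t : ℂ, EFunC y₁ y₂ t = 0 ∧ DFunC y₁ y₂ t = 0) :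
    27 * y₁^4 * y₂^4 - 18 * y₁^2 * y₂^2 + 4 * y₁^2 + 4 * y₂^2 = 1 :=
  stmt_11_general y₁ y₂ h hroot
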